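/- Let ψ : ℤ → ℝ and define the first-order operator coefficients φ : ℤ → ℕ → ℝ by φ t 0 = 1, φ t 1 = ψ_t, and φ t j = 0 for j ≥ 2. Define θ : ℤ → ℕ → ℝ by θ t 0 = 1 and θ t j = (−1)^j · ∏_{k=1}^{j} ψ_{t−k+1} for j ≥ 1. Then θ is a left inverse of φ: for all t ∈ ℤ and all i ∈ ℕ, ∑_{j=0}^{min(1,i)} θ t (i−j) · φ (t−i+j) j equals 1 when i = 0 and equals 0 when i ≥ 1. Moreover, if there is δ ∈ (0,1) with |ψ_t| ≤ δ for all t, then ∑_{j=0}^{∞} |θ t j| ≤ 1/(1−δ) < ∞ for every t, so θ has absolutely summable coefficients. -/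
import Mathlib


open Finset

/-- Example 2 of the paper (equation (7)): explicit inverse of the first-order
time-varying operator `1 + ψ_t B`, with absolute summability under the uniform bound
`|ψ t| ≤ δ < 1`. -/
theorem stmt_18 (ψ : ℤ → ℝ)
    (φ : ℤ → ℕ → ℝ)
    (hφ0 : ∀ t : ℤ, φ t 0 = 1)
    (hφ1 : ∀ t : ℤ, φ t 1 = ψ t)
    (hφj : ∀ (t : ℤ) (j : ℕ), 2 ≤ j → φ t j = 0)
    (θ : ℤ → ℕ → ℝ)
    (hθ0 : ∀ t : ℤ, θ t 0 = 1)
    (hθ : ∀ (t : ℤ) (j : ℕ), 1 ≤ j →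
      θ t j = (-1 : ℝ) ^ j * ∏ k ∈ Finset.Icc 1 j, ψ (t - k + 1)) :
    (∀ (t : ℤ) (i : ℕ),
      ∑ j ∈ Finset.range (min 1 i + 1), θ t (i - j) * φ (t - i + j) j =
        if i = 0 then 1 else 0) ∧
    (∀ δ : ℝ, 0 < δ → δ < 1 → (∀ t : ℤ, |ψ t| ≤ δ) →
      ∀ t : ℤ, (Summable fun j => |θ t j|) ∧ ∑' j : ℕ, |θ t j| ≤ 1 / (1 - δ)) := by
  constructor
  · intro t i
    match i with
    | 0 => simp [hθ0, hφ0]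
    | 1 =>
      simp only [min_self, Finset.sum_range_succ, Finset.sum_range_one]
      have h1 : θ t 1 = -ψ t := by
        rw [hθ t 1 le_rfl]; simp
      simp [hθ0, hφ0, hφ1, h1]
    | (n+2) =>
      have hmin : min 1 (n+2) = 1 := by omega
      rw [hmin]
      simp only [Finset.sum_range_succ, Finset.sum_range_one]
      have h1 : θ t (n+2) = (-1:ℝ)^(n+2) * ∏ k ∈ Finset.Icc 1 (n+2), ψ (t - k + 1) := hθ t (n+2) (by omega)
      have h2 : θ t (n+1) = (-1:ℝ)^(n+1) * ∏ k ∈ Finset.Icc 1 (n+1), ψ (t - k + 1) :=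
        hθ t (n+1) (by omega)
      have hprod : ∏ k ∈ Finset.Icc 1 (n+2), ψ (t - k + 1)
          = (∏ k ∈ Finset.Icc 1 (n+1), ψ (t - ((k:ℕ):ℤ) + 1)) * ψ (t - (((n+2:ℕ):ℕ)) + 1) :=
        Finset.prod_Icc_succ_top (by omega : 1 ≤ n+1+1) _
      have hcast : (((n+2:ℕ):ℕ):ℤ) = (n:ℤ)+2 := by push_cast; ring
      rw [hcast] at hprod
      simp only [Finset.sum_range_zero, Nat.sub_zero, zero_add, Nat.cast_zero, add_zero,
        Nat.cast_one, if_neg (by omega : ¬ n+2 = 0)]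
      push_cast
      rw [h1, h2, hφ0, hφ1, hprod, pow_succ]
      ring
  · intro δ hδ0 hδ1 hb t
    have hbound : ∀ j : ℕ, |θ t j| ≤ δ ^ j := by
      intro j
      match j with
      | 0 => simp [hθ0]
      | (m+1) =>
        rw [hθ t (m+1) (by omega)]
        rw [abs_mul, abs_pow, abs_neg, abs_one, one_pow, one_mul, Finset.abs_prod]
        calc ∏ k ∈ Finset.Icc 1 (m+1), |ψ (t - k + 1)|
            ≤ ∏ k ∈ Finset.Icc 1 (m+1), δ :=
              Finset.prod_le_prod (fun k _ => abs_nonneg _) (fun k _ => hb _)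
          _ = δ ^ (m+1) := by
              rw [Finset.prod_const, Nat.card_Icc]
              norm_num
    have hgeom : Summable fun j : ℕ => δ ^ j :=
      summable_geometric_of_lt_one hδ0.le hδ1
    have hsum : Summable fun j => |θ t j| :=
      Summable.of_nonneg_of_le (fun j => abs_nonneg _) hbound hgeom
    refine ⟨hsum, ?_⟩
    calc ∑' j : ℕ, |θ t j| ≤ ∑' j : ℕ, δ ^ j :=
          Summable.tsum_le_tsum hbound hsum hgeom
      _ = (1 - δ)⁻¹ := tsum_geometric_of_lt_one hδ0.le hδ1
      _ = 1 / (1 - δ) := (one_div _).symm
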